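/- Let A₁ and A₂ form a weak tensor product factorization of an R-algebra A, and suppose that for i = 1, 2 the algebra A_i has a quasimonomial basis {e_i(m) : m ∈ Λ_i} parameterized by the enhanced monoid (Λ_i, d_i). Assume that for all m ∈ Λ₁ and r ∈ Λ₂ one has e₂(r)·e₁(m) = q̂^{2t}·(e₁(m)·e₂(r) + y) for some t ∈ ℤ and some y ∈ A₁(d₁ < m)·A₂, where A₁(d₁ < m) denotes the R-span of {e₁(k) : k ∈ Λ₁, d₁(k) <_lex d₁(m)} and the product of two R-submodules is the R-span of pairwise products. Then {e₁(m)·e₂(r) : (m, r) ∈ Λ₁ × Λ₂}, parameterized by the enhanced monoid (Λ₁ × Λ₂, d₁ × d₂), is a quasimonomial basis of A; in particular A is a domain. -/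

import Mathlib

/-- Lexicographic (strict) order on `ℤ^r`. -/
def LexLt {r : ℕ} (a b : Fin r → ℤ) : Prop :=
  ∃ i : Fin r, (∀ j : Fin r, j < i → a j = b j) ∧ a i < b i

/-- `e : Λ → A` is a *quasimonomial basis* of the `R`-algebra `A` parameterized by the
enhanced monoid `(Λ, d)`. -/
def IsQuasimonomialBasis (R : Type*) [CommRing R] {A : Type*} [Ring A] [Algebra R A]
    (qh : Rˣ) {Λ : Type*} [AddCommMonoid Λ] {r : ℕ}
    (d : Λ → Fin r → ℤ) (e : Λ → A) : Prop :=
  LinearIndependent R e ∧ Submodule.span R (Set.range e) = ⊤ ∧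
    ∀ m m' : Λ, ∃ t : ℤ,
      ∃ x ∈ Submodule.span R (e '' {k : Λ | LexLt (d k) (d (m + m'))}),
        e m * e m' = ((qh ^ (2 * t) : Rˣ) : R) • (e (m + m') + x)

section LexLtAux

theorem lexLt_trans {r : ℕ} {a b c : Fin r → ℤ} (h1 : LexLt a b) (h2 : LexLt b c) :
    LexLt a c := by
  obtain ⟨i, hi, hi2⟩ := h1
  obtain ⟨j, hj, hj2⟩ := h2
  rcases lt_trichotomy i j with h | rfl | h
  · exact ⟨i, fun k hk => (hi k hk).trans (hj k (hk.trans h)), (hj i h) ▸ hi2⟩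
  · exact ⟨i, fun k hk => (hi k hk).trans (hj k hk), hi2.trans hj2⟩
  · exact ⟨j, fun k hk => (hi k (hk.trans h)).trans (hj k hk), (hi j h) ▸ hj2⟩

theorem lexLt_irrefl {r : ℕ} (a : Fin r → ℤ) : ¬ LexLt a a := by
  rintro ⟨i, -, h⟩; exact lt_irrefl _ h

theorem lexLt_trichotomy {r : ℕ} (a b : Fin r → ℤ) : a = b ∨ LexLt a b ∨ LexLt b a := by
  by_cases h : a = b
  · exact Or.inl h
  · right
    have hne : (Finset.univ.filter fun i => a i ≠ b i).Nonempty := by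
      by_contra hc
      rw [Finset.not_nonempty_iff_eq_empty, Finset.filter_eq_empty_iff] at hc
      exact h (funext fun i => not_not.1 (hc (Finset.mem_univ i)))
    set s := Finset.univ.filter fun i => a i ≠ b i with hs
    set i := s.min' hne with hi
    have hmem : i ∈ s := s.min'_mem hne
    have hine : a i ≠ b i := (Finset.mem_filter.1 hmem).2
    have hkey : ∀ j, j < i → a j = b j := by
      intro j hj
      by_contra hc
      exact absurd (s.min'_le j (Finset.mem_filter.2 ⟨Finset.mem_univ j, hc⟩)) (not_le.2 hj)
    rcases lt_or_gt_of_ne hine with h' | h'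
    · exact Or.inl ⟨i, hkey, h'⟩
    · exact Or.inr ⟨i, fun j hj => (hkey j hj).symm, h'⟩

theorem lexLt_add_right {r : ℕ} {a b : Fin r → ℤ} (c : Fin r → ℤ) (h : LexLt a b) :
    LexLt (a + c) (b + c) := by
  obtain ⟨i, hi, hi2⟩ := h
  exact ⟨i, fun j hj => by simp [hi j hj], by simpa using hi2⟩

theorem lexLt_add_left {r : ℕ} {a b : Fin r → ℤ} (c : Fin r → ℤ) (h : LexLt a b) :
    LexLt (c + a) (c + b) := by
  obtain ⟨i, hi, hi2⟩ := h
  exact ⟨i, fun j hj => by simp [hi j hj], by simpa using hi2⟩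

theorem fin_append_add {r₁ r₂ : ℕ} (a a' : Fin r₁ → ℤ) (b b' : Fin r₂ → ℤ) :
    Fin.append (a + a') (b + b') = Fin.append a b + Fin.append a' b' := by
  funext i
  refine Fin.addCases (fun i => ?_) (fun i => ?_) i <;>
    simp [Fin.append_left, Fin.append_right]

theorem lexLt_append_left {r₁ r₂ : ℕ} {a a' : Fin r₁ → ℤ} (b b' : Fin r₂ → ℤ)
    (h : LexLt a a') : LexLt (Fin.append a b) (Fin.append a' b') := by
  obtain ⟨i, hi, hi2⟩ := h
  refine ⟨Fin.castAdd r₂ i, fun j hj => ?_, by simpa [Fin.append_left] using hi2⟩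
  have hj0 : j.val < i.val := hj
  have hj1 : j.val < r₁ := hj0.trans i.isLt
  have hje : j = Fin.castAdd r₂ ⟨j.val, hj1⟩ := Fin.ext rfl
  rw [hje, Fin.append_left, Fin.append_left]
  exact hi ⟨j.val, hj1⟩ hj0

theorem lexLt_append_right {r₁ r₂ : ℕ} (a : Fin r₁ → ℤ) {b b' : Fin r₂ → ℤ}
    (h : LexLt b b') : LexLt (Fin.append a b) (Fin.append a b') := by
  obtain ⟨i, hi, hi2⟩ := h
  refine ⟨Fin.natAdd r₁ i, fun j hj => ?_, by simpa [Fin.append_right] using hi2⟩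
  have hj0 : j.val < r₁ + i.val := hj
  by_cases hc : j.val < r₁
  · have hje : j = Fin.castAdd r₂ ⟨j.val, hc⟩ := Fin.ext rfl
    rw [hje, Fin.append_left, Fin.append_left]
  · have hc2 : j.val - r₁ < r₂ := by omega
    have hje : j = Fin.natAdd r₁ ⟨j.val - r₁, hc2⟩ := Fin.ext (by simp; omega)
    rw [hje, Fin.append_right, Fin.append_right]
    exact hi ⟨j.val - r₁, hc2⟩ (by simp [Fin.lt_def]; omega)

end LexLtAux

section ReprAux

theorem repr_apply_zero_of_span {R : Type*} [CommRing R] {M : Type*} [AddCommGroup M]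
    [Module R M] {Λ : Type*} (B : Module.Basis Λ R M) (e : Λ → M) (he : ∀ k, B k = e k)
    {s : Set Λ} {k₀ : Λ} (hk : ∀ k ∈ s, k ≠ k₀) {v : M}
    (hv : v ∈ Submodule.span R (e '' s)) : B.repr v k₀ = 0 := by
  induction hv using Submodule.span_induction with
  | mem x h =>
    obtain ⟨k, hks, rfl⟩ := h
    rw [← he, B.repr_self]
    exact Finsupp.single_eq_of_ne' (hk k hks)
  | zero => simp
  | add x y _ _ hx hy => simp [hx, hy]
  | smul a x _ hx => simp [hx]

theorem exists_T_max {Λ : Type*} (T : Λ → Λ → Prop)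
    (htrans : ∀ {p q s : Λ}, T p q → T q s → T p s)
    (htot : ∀ p q : Λ, p = q ∨ T p q ∨ T q p) :
    ∀ s : Finset Λ, s.Nonempty → ∃ m ∈ s, ∀ p ∈ s, p = m ∨ T p m := by
  classical
  intro s
  induction s using Finset.induction_on with
  | empty => intro h; simp at h
  | @insert a s' hna ih =>
    intro _
    rcases s'.eq_empty_or_nonempty with rfl | hs'
    · exact ⟨a, Finset.mem_insert_self a _, fun p hp => Or.inl (by simpa using hp)⟩
    · obtain ⟨m, hm, hmax⟩ := ih hs'
      rcases htot a m with rfl | h | h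
      · refine ⟨a, Finset.mem_insert_of_mem hm, fun p hp => ?_⟩
        rcases Finset.mem_insert.1 hp with rfl | hp
        · exact Or.inl rfl
        · exact hmax p hp
      · refine ⟨m, Finset.mem_insert_of_mem hm, fun p hp => ?_⟩
        rcases Finset.mem_insert.1 hp with rfl | hp
        · exact Or.inr h
        · exact hmax p hp
      · refine ⟨a, Finset.mem_insert_self a _, fun p hp => ?_⟩
        rcases Finset.mem_insert.1 hp with rfl | hp
        · exact Or.inl rfl
        · rcases hmax p hp with rfl | hp2
          · exact Or.inr h
          · exact Or.inr (htrans hp2 h)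

end ReprAux

theorem prod_rel {R : Type*} [CommRing R] (qh : Rˣ) {A : Type*} [Ring A] [Algebra R A]
    {Λ₁ Λ₂ : Type*} [AddCommMonoid Λ₁] [AddCommMonoid Λ₂] {r₁ r₂ : ℕ}
    (d₁ : Λ₁ → Fin r₁ → ℤ) (d₂ : Λ₂ → Fin r₂ → ℤ)
    (hd₁ : ∀ m m' : Λ₁, d₁ (m + m') = d₁ m + d₁ m')
    (f₁ : Λ₁ → A) (f₂ : Λ₂ → A) (N₂ : Submodule R A)
    (hN₂ : N₂ = Submodule.span R (Set.range f₂))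
    (hrel₁ : ∀ m m' : Λ₁, ∃ t : ℤ,
      ∃ X ∈ Submodule.span R (f₁ '' {k : Λ₁ | LexLt (d₁ k) (d₁ (m + m'))}),
        f₁ m * f₁ m' = ((qh ^ (2 * t) : Rˣ) : R) • (f₁ (m + m') + X))
    (hrel₂ : ∀ l l' : Λ₂, ∃ t : ℤ,
      ∃ X ∈ Submodule.span R (f₂ '' {k : Λ₂ | LexLt (d₂ k) (d₂ (l + l'))}),
        f₂ l * f₂ l' = ((qh ^ (2 * t) : Rˣ) : R) • (f₂ (l + l') + X))
    (hexch : ∀ (m : Λ₁) (l : Λ₂), ∃ t : ℤ,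
      ∃ y ∈ Submodule.span R (f₁ '' {k : Λ₁ | LexLt (d₁ k) (d₁ m)}) * N₂,
        f₂ l * f₁ m = ((qh ^ (2 * t) : Rˣ) : R) • (f₁ m * f₂ l + y))
    (m m' : Λ₁) (rr rr' : Λ₂) : ∃ t : ℤ,
      ∃ x ∈ Submodule.span R ((fun p : Λ₁ × Λ₂ => f₁ p.1 * f₂ p.2) ''
          {k : Λ₁ × Λ₂ | LexLt (Fin.append (d₁ k.1) (d₂ k.2))
            (Fin.append (d₁ (m + m')) (d₂ (rr + rr')))}),
        (f₁ m * f₂ rr) * (f₁ m' * f₂ rr') =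
          ((qh ^ (2 * t) : Rˣ) : R) • (f₁ (m + m') * f₂ (rr + rr') + x) := by
  obtain ⟨t₁, y, hy, h1⟩ := hexch m' rr
  obtain ⟨t₂, X₁, hX₁, h2⟩ := hrel₁ m m'
  obtain ⟨t₃, X₂, hX₂, h3⟩ := hrel₂ rr rr'
  set E : Λ₁ × Λ₂ → A := fun p => f₁ p.1 * f₂ p.2 with hE
  set L := Submodule.span R (E ''
      {k : Λ₁ × Λ₂ | LexLt (Fin.append (d₁ k.1) (d₂ k.2))
        (Fin.append (d₁ (m + m')) (d₂ (rr + rr')))}) with hL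
  -- basic facts about N₂
  have hf₂mem : ∀ l : Λ₂, f₂ l ∈ N₂ := fun l => by
    rw [hN₂]; exact Submodule.subset_span ⟨l, rfl⟩
  have hspanf₂le : ∀ s : Set Λ₂, Submodule.span R (f₂ '' s) ≤ N₂ := fun s => by
    rw [hN₂]; exact Submodule.span_mono (Set.image_subset_range _ _)
  have hf₂mul : ∀ l l' : Λ₂, f₂ l * f₂ l' ∈ N₂ := by
    intro l l'
    obtain ⟨t, X, hX, heq⟩ := hrel₂ l l'
    rw [heq]
    exact Submodule.smul_mem _ _ (Submodule.add_mem _ (hf₂mem _) (hspanf₂le _ hX))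
  -- the key inclusion
  have hM1 : ∀ (a : Fin r₁ → ℤ),
      Submodule.span R (f₁ '' {k : Λ₁ | LexLt (d₁ k) a}) * N₂ ≤
        Submodule.span R (E '' {p : Λ₁ × Λ₂ |
          LexLt (Fin.append (d₁ p.1) (d₂ p.2)) (Fin.append a (d₂ (rr + rr')))}) := by
    intro a
    rw [hN₂, Submodule.span_mul_span]
    refine Submodule.span_le.2 ?_
    rintro z hz
    rw [Set.mem_mul] at hz
    obtain ⟨z₁, hz₁, z₂, hz₂, rfl⟩ := hz
    obtain ⟨k, hk, rfl⟩ := hz₁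
    obtain ⟨lq, rfl⟩ := hz₂
    exact Submodule.subset_span ⟨(k, lq), lexLt_append_left _ _ hk, rfl⟩
  have hM1' : ∀ (w z : A), w ∈ Submodule.span R (f₁ '' {k : Λ₁ | LexLt (d₁ k) (d₁ (m + m'))}) →
      z ∈ N₂ → w * z ∈ L := by
    intro w z hw hz
    exact hM1 (d₁ (m + m')) (Submodule.mul_mem_mul hw hz)
  -- membership lemma 2
  have hmem2 : f₁ (m + m') * X₂ ∈ L := by
    clear h3
    induction hX₂ using Submodule.span_induction with
    | mem w hw =>
      obtain ⟨lq, hlq, rfl⟩ := hw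
      exact Submodule.subset_span ⟨(m + m', lq), lexLt_append_right _ hlq, rfl⟩
    | zero => rw [mul_zero]; exact Submodule.zero_mem L
    | add a b _ _ ha hb => rw [mul_add]; exact Submodule.add_mem _ ha hb
    | smul c a _ ha => rw [mul_smul_comm]; exact Submodule.smul_mem _ _ ha
  -- membership lemma 3
  have hmem3 : ∀ z ∈ Submodule.span R (f₁ '' {k : Λ₁ | LexLt (d₁ k) (d₁ m')}) * N₂,
      f₁ m * z * f₂ rr' ∈ L := by
    rw [hN₂, Submodule.span_mul_span]
    intro z hz
    induction hz using Submodule.span_induction with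
    | mem w hw =>
      rw [Set.mem_mul] at hw
      obtain ⟨w₁, hw₁, w₂, hw₂, rfl⟩ := hw
      obtain ⟨k, hk, rfl⟩ := hw₁
      obtain ⟨lq, rfl⟩ := hw₂
      obtain ⟨t, X, hX, heq⟩ := hrel₁ m k
      have hstep : f₁ m * (f₁ k * f₂ lq) * f₂ rr' =
          ((qh ^ (2 * t) : Rˣ) : R) • ((f₁ (m + k) + X) * (f₂ lq * f₂ rr')) := by
        rw [show f₁ m * (f₁ k * f₂ lq) * f₂ rr' = (f₁ m * f₁ k) * (f₂ lq * f₂ rr') by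
          noncomm_ring, heq, smul_mul_assoc]
      rw [hstep]
      refine Submodule.smul_mem _ _ ?_
      have hlt : LexLt (d₁ (m + k)) (d₁ (m + m')) := by
        rw [hd₁, hd₁]; exact lexLt_add_left _ hk
      have hfk : f₁ (m + k) + X ∈
          Submodule.span R (f₁ '' {k' : Λ₁ | LexLt (d₁ k') (d₁ (m + m'))}) := by
        refine Submodule.add_mem _ (Submodule.subset_span ⟨m + k, hlt, rfl⟩) ?_
        refine Submodule.span_mono (Set.image_mono ?_) hX
        intro k' hk'
        exact lexLt_trans hk' hlt
      exact hM1' _ _ hfk (hf₂mul lq rr')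
    | zero => rw [mul_zero, zero_mul]; exact Submodule.zero_mem L
    | add a b _ _ ha hb => rw [mul_add, add_mul]; exact Submodule.add_mem _ ha hb
    | smul c a _ ha => rw [mul_smul_comm, smul_mul_assoc]; exact Submodule.smul_mem _ _ ha
  have hX₂N₂ : X₂ ∈ N₂ := hspanf₂le _ hX₂
  refine ⟨t₁ + t₂ + t₃,
    f₁ (m + m') * X₂ + (X₁ * f₂ (rr + rr') + X₁ * X₂) +
      ((qh ^ (2 * (-t₂ - t₃)) : Rˣ) : R) • (f₁ m * y * f₂ rr'), ?_, ?_⟩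
  · refine Submodule.add_mem _ (Submodule.add_mem _ hmem2 (Submodule.add_mem _ ?_ ?_)) ?_
    · exact hM1' _ _ hX₁ (hf₂mem _)
    · exact hM1' _ _ hX₁ hX₂N₂
    · exact Submodule.smul_mem _ _ (hmem3 y hy)
  · have hv1 : ((qh ^ (2 * t₂) : Rˣ) : R) * ((qh ^ (2 * t₃) : Rˣ) : R) *
        ((qh ^ (2 * (-t₂ - t₃)) : Rˣ) : R) = 1 := by
      rw [← Units.val_mul, ← Units.val_mul, ← zpow_add, ← zpow_add,
        show 2 * t₂ + 2 * t₃ + 2 * (-t₂ - t₃) = 0 by ring, zpow_zero, Units.val_one]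
    have hU : ((qh ^ (2 * (t₁ + t₂ + t₃)) : Rˣ) : R) =
        ((qh ^ (2 * t₁) : Rˣ) : R) *
          (((qh ^ (2 * t₂) : Rˣ) : R) * ((qh ^ (2 * t₃) : Rˣ) : R)) := by
      rw [show 2 * (t₁ + t₂ + t₃) = 2 * t₁ + (2 * t₂ + 2 * t₃) by ring, zpow_add, zpow_add,
        Units.val_mul, Units.val_mul]
    calc (f₁ m * f₂ rr) * (f₁ m' * f₂ rr')
        = f₁ m * (f₂ rr * f₁ m') * f₂ rr' := by noncomm_ring
      _ = f₁ m * (((qh ^ (2 * t₁) : Rˣ) : R) • (f₁ m' * f₂ rr + y)) * f₂ rr' := by rw [h1]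
      _ = ((qh ^ (2 * t₁) : Rˣ) : R) • (f₁ m * (f₁ m' * f₂ rr + y) * f₂ rr') := by
          rw [mul_smul_comm, smul_mul_assoc]
      _ = ((qh ^ (2 * t₁) : Rˣ) : R) •
            ((f₁ m * f₁ m') * (f₂ rr * f₂ rr') + f₁ m * y * f₂ rr') := by
          rw [show f₁ m * (f₁ m' * f₂ rr + y) * f₂ rr' =
            (f₁ m * f₁ m') * (f₂ rr * f₂ rr') + f₁ m * y * f₂ rr' by noncomm_ring]
      _ = ((qh ^ (2 * t₁) : Rˣ) : R) •
            ((((qh ^ (2 * t₂) : Rˣ) : R) • (f₁ (m + m') + X₁)) *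
              (((qh ^ (2 * t₃) : Rˣ) : R) • (f₂ (rr + rr') + X₂)) + f₁ m * y * f₂ rr') := by
          rw [h2, h3]
      _ = ((qh ^ (2 * (t₁ + t₂ + t₃)) : Rˣ) : R) •
            (f₁ (m + m') * f₂ (rr + rr') +
              (f₁ (m + m') * X₂ + (X₁ * f₂ (rr + rr') + X₁ * X₂) +
                ((qh ^ (2 * (-t₂ - t₃)) : Rˣ) : R) • (f₁ m * y * f₂ rr'))) := by
          have hUv : ((qh ^ (2 * (t₁ + t₂ + t₃)) : Rˣ) : R) *
              ((qh ^ (2 * (-t₂ - t₃)) : Rˣ) : R) = ((qh ^ (2 * t₁) : Rˣ) : R) := by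
            rw [← Units.val_mul, ← zpow_add,
              show 2 * (t₁ + t₂ + t₃) + 2 * (-t₂ - t₃) = 2 * t₁ by ring]
          have hfinal : ((qh ^ (2 * (t₁ + t₂ + t₃)) : Rˣ) : R) •
              (f₁ (m + m') * f₂ (rr + rr') +
                (f₁ (m + m') * X₂ + (X₁ * f₂ (rr + rr') + X₁ * X₂) +
                  ((qh ^ (2 * (-t₂ - t₃)) : Rˣ) : R) • (f₁ m * y * f₂ rr'))) =
              ((qh ^ (2 * t₁) : Rˣ) : R) •
                ((((qh ^ (2 * t₂) : Rˣ) : R) * ((qh ^ (2 * t₃) : Rˣ) : R)) •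
                  (f₁ (m + m') * f₂ (rr + rr') +
                    (f₁ (m + m') * X₂ + (X₁ * f₂ (rr + rr') + X₁ * X₂))) +
                  f₁ m * y * f₂ rr') := by
            rw [← add_assoc, smul_add, smul_smul, hUv, hU, mul_smul, ← smul_add]
          rw [smul_mul_smul_comm]
          rw [show (f₁ (m + m') + X₁) * (f₂ (rr + rr') + X₂) =
            f₁ (m + m') * f₂ (rr + rr') +
              (f₁ (m + m') * X₂ + (X₁ * f₂ (rr + rr') + X₁ * X₂)) by noncomm_ring]
          exact hfinal.symm

theorem qmb_noZeroDivisors {R : Type*} [CommRing R] [IsDomain R] (qh : Rˣ)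
    {A : Type*} [Ring A] [Algebra R A] {Λ : Type*} [AddCommMonoid Λ] {r : ℕ}
    (d : Λ → Fin r → ℤ) (hd : ∀ m m' : Λ, d (m + m') = d m + d m')
    (e : Λ → A) (hb : IsQuasimonomialBasis R qh d e)
    (T : Λ → Λ → Prop) (hirr : ∀ p, ¬ T p p)
    (htrans : ∀ {p q s : Λ}, T p q → T q s → T p s)
    (htot : ∀ p q : Λ, p = q ∨ T p q ∨ T q p)
    (hadd : ∀ p q s : Λ, T p q → T (p + s) (q + s))
    (href : ∀ p q : Λ, LexLt (d p) (d q) → T p q) :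
    NoZeroDivisors A := by
  classical
  obtain ⟨hli, hsp, hrel⟩ := hb
  let B : Module.Basis Λ R A := Module.Basis.mk hli hsp.ge
  have hBe : ∀ k, B k = e k := fun k => Module.Basis.mk_apply hli hsp.ge k
  have hTd : ∀ p q, T p q → d p = d q ∨ LexLt (d p) (d q) := by
    intro p q h
    rcases lexLt_trichotomy (d p) (d q) with h1 | h1 | h1
    · exact Or.inl h1
    · exact Or.inr h1
    · exact absurd (htrans h (href q p h1)) (hirr p)
  have hadd' : ∀ p q s : Λ, T p q → T (s + p) (s + q) := by
    intro p q s h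
    rw [add_comm s p, add_comm s q]
    exact hadd p q s h
  refine ⟨fun {x y} hxy => ?_⟩
  by_contra hcon
  push_neg at hcon
  obtain ⟨hx0, hy0⟩ := hcon
  have hPne : ((B.repr x).support).Nonempty := by
    rw [Finsupp.support_nonempty_iff]
    intro h0
    exact hx0 (by simpa using (LinearEquiv.map_eq_zero_iff B.repr).1 h0)
  have hQne : ((B.repr y).support).Nonempty := by
    rw [Finsupp.support_nonempty_iff]
    intro h0
    exact hy0 (by simpa using (LinearEquiv.map_eq_zero_iff B.repr).1 h0)
  obtain ⟨p₀, hp₀, hp₀max⟩ := exists_T_max T htrans htot _ hPne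
  obtain ⟨q₀, hq₀, hq₀max⟩ := exists_T_max T htrans htot _ hQne
  set k₀ := p₀ + q₀ with hk₀
  have hdle : ∀ p q : Λ, (p = p₀ ∨ T p p₀) → (q = q₀ ∨ T q q₀) →
      d (p + q) = d k₀ ∨ LexLt (d (p + q)) (d k₀) := by
    intro p q hp hq
    have h1 : d p = d p₀ ∨ LexLt (d p) (d p₀) := by
      rcases hp with rfl | h
      · exact Or.inl rfl
      · exact hTd _ _ h
    have h2 : d q = d q₀ ∨ LexLt (d q) (d q₀) := by
      rcases hq with rfl | h
      · exact Or.inl rfl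
      · exact hTd _ _ h
    rw [hk₀, hd, hd]
    rcases h1 with h1 | h1 <;> rcases h2 with h2 | h2
    · exact Or.inl (by rw [h1, h2])
    · exact Or.inr (by rw [h1]; exact lexLt_add_left _ h2)
    · exact Or.inr (by rw [h2]; exact lexLt_add_right _ h1)
    · exact Or.inr (lexLt_trans (lexLt_add_right _ h1) (lexLt_add_left _ h2))
  have huniq : ∀ p q : Λ, (p = p₀ ∨ T p p₀) → (q = q₀ ∨ T q q₀) → p + q = k₀ →
      p = p₀ ∧ q = q₀ := by
    intro p q hp hq hpq
    rcases hp with rfl | hp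
    · rcases hq with rfl | hq
      · exact ⟨rfl, rfl⟩
      · have h1 : T (p + q) (p + q₀) := hadd' q q₀ p hq
        rw [hpq, ← hk₀] at h1
        exact absurd h1 (hirr k₀)
    · have h1 : T (p + q) (p₀ + q) := hadd p p₀ q hp
      have h3 : T (p + q) (p₀ + q₀) := by
        rcases hq with rfl | hq
        · exact h1
        · exact htrans h1 (hadd' q q₀ p₀ hq)
      rw [hpq, ← hk₀] at h3
      exact absurd h3 (hirr k₀)
  let l : A →ₗ[R] R := (Finsupp.lapply k₀).comp (B.repr : A →ₗ[R] (Λ →₀ R))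
  have hl : ∀ z : A, l z = B.repr z k₀ := fun z => rfl
  have hsingle : ∀ s : Λ, l (e s) = if s = k₀ then 1 else 0 := by
    intro s
    rw [hl, ← hBe, B.repr_self, Finsupp.single_apply]
  have hvanish : ∀ p q : Λ, (p = p₀ ∨ T p p₀) → (q = q₀ ∨ T q q₀) →
      ∀ x' : A, x' ∈ Submodule.span R (e '' {k : Λ | LexLt (d k) (d (p + q))}) →
        l x' = 0 := by
    intro p q hp hq x' hx'
    rw [hl]
    refine repr_apply_zero_of_span B e hBe ?_ hx'
    intro k hk hkk
    rw [hkk] at hk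
    rcases hdle p q hp hq with h | h
    · rw [h] at hk
      exact lexLt_irrefl _ hk
    · exact lexLt_irrefl _ (lexLt_trans hk h)
  have hkey : ∀ p q : Λ, (p = p₀ ∨ T p p₀) → (q = q₀ ∨ T q q₀) → p + q ≠ k₀ →
      l (e p * e q) = 0 := by
    intro p q hp hq hne
    obtain ⟨t, x', hx', heq⟩ := hrel p q
    rw [heq, map_smul, map_add, hsingle, if_neg hne, hvanish p q hp hq x' hx']
    simp
  obtain ⟨t₀, x₀, hx₀, heq₀⟩ := hrel p₀ q₀
  have hlq : l (e p₀ * e q₀) = ((qh ^ (2 * t₀) : Rˣ) : R) := by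
    rw [heq₀, map_smul, map_add, hsingle, if_pos rfl,
      hvanish p₀ q₀ (Or.inl rfl) (Or.inl rfl) x₀ hx₀]
    simp
  have hx : x = ∑ p ∈ (B.repr x).support, B.repr x p • e p := by
    have h := B.linearCombination_repr x
    rw [Finsupp.linearCombination_apply, Finsupp.sum] at h
    conv_lhs => rw [← h]
    exact Finset.sum_congr rfl fun p _ => by rw [hBe]
  have hy : y = ∑ q ∈ (B.repr y).support, B.repr y q • e q := by
    have h := B.linearCombination_repr y
    rw [Finsupp.linearCombination_apply, Finsupp.sum] at h
    conv_lhs => rw [← h]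
    exact Finset.sum_congr rfl fun q _ => by rw [hBe]
  have hxyl : l (x * y) = (B.repr x p₀ * B.repr y q₀) * ((qh ^ (2 * t₀) : Rˣ) : R) := by
    conv_lhs => rw [hx, hy]
    rw [Finset.sum_mul_sum, map_sum, Finset.sum_eq_single p₀]
    rotate_left
    · intro p hp hpne
      rw [map_sum]
      refine Finset.sum_eq_zero fun q hq => ?_
      rw [smul_mul_smul_comm, map_smul, smul_eq_mul]
      have hpq : p + q ≠ k₀ := fun h =>
        hpne ((huniq p q (hp₀max p hp) (hq₀max q hq) h).1)
      rw [hkey p q (hp₀max p hp) (hq₀max q hq) hpq, mul_zero]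
    · intro h
      exact absurd hp₀ h
    rw [map_sum, Finset.sum_eq_single q₀]
    rotate_left
    · intro q hq hqne
      rw [smul_mul_smul_comm, map_smul, smul_eq_mul]
      have hpq : p₀ + q ≠ k₀ := fun h =>
        hqne ((huniq p₀ q (Or.inl rfl) (hq₀max q hq) h).2)
      rw [hkey p₀ q (Or.inl rfl) (hq₀max q hq) hpq, mul_zero]
    · intro h
      exact absurd hq₀ h
    rw [smul_mul_smul_comm, map_smul, smul_eq_mul, hlq]
  rw [hxy, map_zero] at hxyl
  have h1 : B.repr x p₀ ≠ 0 := Finsupp.mem_support_iff.1 hp₀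
  have h2 : B.repr y q₀ ≠ 0 := Finsupp.mem_support_iff.1 hq₀
  exact (mul_ne_zero (mul_ne_zero h1 h2) (Units.ne_zero _)) hxyl.symm

open TensorProduct

/-- Two subalgebras `A₁, A₂` of `A` with quasimonomial bases `e₁, e₂`, forming a weak
tensor product factorization of `A` (the multiplication map `A₁ ⊗ A₂ → A` is bijective
and `A₁A₂ = A₂A₁`), such that
`e₂(r) * e₁(m) ≐ e₁(m) * e₂(r) + (A₁(d₁ < m) * A₂)`.
Then the products `e₁(m) * e₂(r)` form a quasimonomial basis of `A` parameterized by
`(Λ₁ × Λ₂, d₁ × d₂)`; in particular `A` is a domain. -/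
theorem quasimonomialBasis_of_weak_tensor_factorization
    {R : Type*} [CommRing R] [IsDomain R] (qh : Rˣ)
    {A : Type*} [Ring A] [Algebra R A]
    (A₁ A₂ : Subalgebra R A)
    (hbij : Function.Bijective
      (Submodule.mulMap (Subalgebra.toSubmodule A₁) (Subalgebra.toSubmodule A₂)))
    (hcomm : Subalgebra.toSubmodule A₁ * Subalgebra.toSubmodule A₂
      = Subalgebra.toSubmodule A₂ * Subalgebra.toSubmodule A₁)
    {Λ₁ Λ₂ : Type*} [AddCommMonoid Λ₁] [AddCommMonoid Λ₂]
    {κ₁ κ₂ : Type*} (emb₁ : Λ₁ →+ (κ₁ →₀ ℤ)) (hemb₁ : Function.Injective emb₁)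
    (emb₂ : Λ₂ →+ (κ₂ →₀ ℤ)) (hemb₂ : Function.Injective emb₂)
    {r₁ r₂ : ℕ} (d₁ : Λ₁ → Fin r₁ → ℤ) (d₂ : Λ₂ → Fin r₂ → ℤ)
    (hd₁ : ∀ m m' : Λ₁, d₁ (m + m') = d₁ m + d₁ m')
    (hd₂ : ∀ m m' : Λ₂, d₂ (m + m') = d₂ m + d₂ m')
    (e₁ : Λ₁ → A₁) (e₂ : Λ₂ → A₂)
    (hb₁ : IsQuasimonomialBasis R qh d₁ e₁)
    (hb₂ : IsQuasimonomialBasis R qh d₂ e₂)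
    (hexch : ∀ (m : Λ₁) (r : Λ₂), ∃ t : ℤ,
      ∃ y ∈ Submodule.span R ((fun k : Λ₁ => (e₁ k : A)) '' {k : Λ₁ | LexLt (d₁ k) (d₁ m)})
            * Subalgebra.toSubmodule A₂,
        (e₂ r : A) * (e₁ m : A) = ((qh ^ (2 * t) : Rˣ) : R) • ((e₁ m : A) * (e₂ r : A) + y)) :
    IsQuasimonomialBasis R qh
      (fun p : Λ₁ × Λ₂ => Fin.append (d₁ p.1) (d₂ p.2))
      (fun p : Λ₁ × Λ₂ => (e₁ p.1 : A) * (e₂ p.2 : A)) ∧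
    NoZeroDivisors A := by
  classical
  -- the product basis
  let B₁ : Module.Basis Λ₁ R A₁ := Module.Basis.mk hb₁.1 hb₁.2.1.ge
  let B₂ : Module.Basis Λ₂ R A₂ := Module.Basis.mk hb₂.1 hb₂.2.1.ge
  let eqv : (A₁ ⊗[R] A₂) ≃ₗ[R] A :=
    LinearEquiv.ofBijective (Submodule.mulMap (Subalgebra.toSubmodule A₁)
      (Subalgebra.toSubmodule A₂)) hbij
  let B : Module.Basis (Λ₁ × Λ₂) R A := (B₁.tensorProduct B₂).map eqv
  have hBE : ∀ p : Λ₁ × Λ₂, B p = (e₁ p.1 : A) * (e₂ p.2 : A) := by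
    intro p
    show eqv (B₁.tensorProduct B₂ p) = _
    simp only [Module.Basis.tensorProduct_apply', LinearEquiv.ofBijective_apply, eqv]
    erw [Submodule.mulMap_tmul]
    simp [B₁, B₂]
  have hBcoe : ⇑B = fun p : Λ₁ × Λ₂ => (e₁ p.1 : A) * (e₂ p.2 : A) := funext hBE
  -- coerced quasimonomial relations
  have hrel₁ : ∀ m m' : Λ₁, ∃ t : ℤ,
      ∃ X ∈ Submodule.span R ((fun k : Λ₁ => (e₁ k : A)) ''
          {k : Λ₁ | LexLt (d₁ k) (d₁ (m + m'))}),
        (e₁ m : A) * (e₁ m' : A) = ((qh ^ (2 * t) : Rˣ) : R) • ((e₁ (m + m') : A) + X) := by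
    intro m m'
    obtain ⟨t, xx, hxx, heq⟩ := hb₁.2.2 m m'
    refine ⟨t, (xx : A), ?_, ?_⟩
    · have h2 := Submodule.apply_mem_span_image_of_mem_span (A₁.val.toLinearMap) hxx
      simpa [Set.image_image] using h2
    · have h2 := congrArg (A₁.val) heq
      simpa using h2
  have hrel₂ : ∀ l l' : Λ₂, ∃ t : ℤ,
      ∃ X ∈ Submodule.span R ((fun k : Λ₂ => (e₂ k : A)) ''
          {k : Λ₂ | LexLt (d₂ k) (d₂ (l + l'))}),
        (e₂ l : A) * (e₂ l' : A) = ((qh ^ (2 * t) : Rˣ) : R) • ((e₂ (l + l') : A) + X) := by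
    intro l l'
    obtain ⟨t, xx, hxx, heq⟩ := hb₂.2.2 l l'
    refine ⟨t, (xx : A), ?_, ?_⟩
    · have h2 := Submodule.apply_mem_span_image_of_mem_span (A₂.val.toLinearMap) hxx
      simpa [Set.image_image] using h2
    · have h2 := congrArg (A₂.val) heq
      simpa using h2
  have hN₂ : Subalgebra.toSubmodule A₂ =
      Submodule.span R (Set.range fun l : Λ₂ => (e₂ l : A)) := by
    have h := congrArg (Submodule.map (Subalgebra.toSubmodule A₂).subtype) hb₂.2.1
    rw [Submodule.map_span, Submodule.map_top, Submodule.range_subtype,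
      ← Set.range_comp] at h
    exact h.symm
  -- the multiplication rule for the product family
  have hrelE : ∀ p p' : Λ₁ × Λ₂, ∃ t : ℤ,
      ∃ x ∈ Submodule.span R ((fun p : Λ₁ × Λ₂ => (e₁ p.1 : A) * (e₂ p.2 : A)) ''
          {k : Λ₁ × Λ₂ | LexLt (Fin.append (d₁ k.1) (d₂ k.2))
            (Fin.append (d₁ (p.1 + p'.1)) (d₂ (p.2 + p'.2)))}),
        ((e₁ p.1 : A) * (e₂ p.2 : A)) * ((e₁ p'.1 : A) * (e₂ p'.2 : A)) =
          ((qh ^ (2 * t) : Rˣ) : R) •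
            ((e₁ (p.1 + p'.1) : A) * (e₂ (p.2 + p'.2) : A) + x) :=
    fun p p' => prod_rel qh d₁ d₂ hd₁ (fun k : Λ₁ => (e₁ k : A)) (fun l : Λ₂ => (e₂ l : A))
      (Subalgebra.toSubmodule A₂) hN₂ hrel₁ hrel₂ hexch p.1 p'.1 p.2 p'.2
  have hQMB : IsQuasimonomialBasis R qh
      (fun p : Λ₁ × Λ₂ => Fin.append (d₁ p.1) (d₂ p.2))
      (fun p : Λ₁ × Λ₂ => (e₁ p.1 : A) * (e₂ p.2 : A)) := by
    refine ⟨?_, ?_, ?_⟩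
    · rw [← hBcoe]; exact B.linearIndependent
    · rw [← hBcoe]; exact B.span_eq
    · exact fun m m' => hrelE m m'
  refine ⟨hQMB, ?_⟩
  -- build a strict total additive order on Λ₁ × Λ₂ refining the lexicographic degree
  letI : LinearOrder κ₁ := IsWellOrder.linearOrder WellOrderingRel
  letI : LinearOrder κ₂ := IsWellOrder.linearOrder WellOrderingRel
  let S : Λ₁ × Λ₂ → Λ₁ × Λ₂ → Prop := fun p q =>
    toLex (emb₁ p.1) < toLex (emb₁ q.1) ∨
      (p.1 = q.1 ∧ toLex (emb₂ p.2) < toLex (emb₂ q.2))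
  have hSirr : ∀ p, ¬ S p p := by
    rintro p (h | ⟨-, h⟩) <;> exact lt_irrefl _ h
  have hStrans : ∀ {p q s}, S p q → S q s → S p s := by
    rintro p q s (h1 | ⟨h1, h1'⟩) (h2 | ⟨h2, h2'⟩)
    · exact Or.inl (h1.trans h2)
    · exact Or.inl (h1.trans_eq (by rw [h2]))
    · exact Or.inl (lt_of_eq_of_lt (by rw [h1]) h2)
    · exact Or.inr ⟨h1.trans h2, h1'.trans h2'⟩
  have hStot : ∀ p q, p = q ∨ S p q ∨ S q p := by
    intro p q
    rcases lt_trichotomy (toLex (emb₁ p.1)) (toLex (emb₁ q.1)) with h | h | h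
    · exact Or.inr (Or.inl (Or.inl h))
    · have h1 : p.1 = q.1 := hemb₁ (by exact_mod_cast h)
      rcases lt_trichotomy (toLex (emb₂ p.2)) (toLex (emb₂ q.2)) with h' | h' | h'
      · exact Or.inr (Or.inl (Or.inr ⟨h1, h'⟩))
      · have h2 : p.2 = q.2 := hemb₂ (by exact_mod_cast h')
        exact Or.inl (Prod.ext h1 h2)
      · exact Or.inr (Or.inr (Or.inr ⟨h1.symm, h'⟩))
    · exact Or.inr (Or.inr (Or.inl h))
  have hSadd : ∀ p q s, S p q → S (p + s) (q + s) := by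
    rintro p q s (h | ⟨h, h'⟩)
    · left
      show toLex (emb₁ (p.1 + s.1)) < toLex (emb₁ (q.1 + s.1))
      rw [AddMonoidHom.map_add, AddMonoidHom.map_add, toLex_add, toLex_add]
      exact add_lt_add_left h _
    · right
      refine ⟨by show p.1 + s.1 = q.1 + s.1; rw [h], ?_⟩
      show toLex (emb₂ (p.2 + s.2)) < toLex (emb₂ (q.2 + s.2))
      rw [AddMonoidHom.map_add, AddMonoidHom.map_add, toLex_add, toLex_add]
      exact add_lt_add_left h' _
  set dp : Λ₁ × Λ₂ → Fin (r₁ + r₂) → ℤ := fun p => Fin.append (d₁ p.1) (d₂ p.2) with hdpdef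
  have hdp : ∀ p q : Λ₁ × Λ₂, dp (p + q) = dp p + dp q := by
    intro p q
    show Fin.append (d₁ (p.1 + q.1)) (d₂ (p.2 + q.2)) = _
    rw [hd₁, hd₂, fin_append_add]
  let T : Λ₁ × Λ₂ → Λ₁ × Λ₂ → Prop := fun p q =>
    LexLt (dp p) (dp q) ∨ (dp p = dp q ∧ S p q)
  have hTirr : ∀ p, ¬ T p p := by
    rintro p (h | ⟨-, h⟩)
    · exact lexLt_irrefl _ h
    · exact hSirr p h
  have hTtrans : ∀ {p q s}, T p q → T q s → T p s := by
    rintro p q s (h1 | ⟨h1, h1'⟩) (h2 | ⟨h2, h2'⟩)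
    · exact Or.inl (lexLt_trans h1 h2)
    · exact Or.inl (h2 ▸ h1)
    · exact Or.inl (h1 ▸ h2)
    · exact Or.inr ⟨h1.trans h2, hStrans h1' h2'⟩
  have hTtot : ∀ p q, p = q ∨ T p q ∨ T q p := by
    intro p q
    rcases lexLt_trichotomy (dp p) (dp q) with h | h | h
    · rcases hStot p q with h' | h' | h'
      · exact Or.inl h'
      · exact Or.inr (Or.inl (Or.inr ⟨h, h'⟩))
      · exact Or.inr (Or.inr (Or.inr ⟨h.symm, h'⟩))
    · exact Or.inr (Or.inl (Or.inl h))
    · exact Or.inr (Or.inr (Or.inl h))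
  have hTadd : ∀ p q s, T p q → T (p + s) (q + s) := by
    rintro p q s (h | ⟨h, h'⟩)
    · exact Or.inl (by rw [hdp, hdp]; exact lexLt_add_right _ h)
    · exact Or.inr ⟨by rw [hdp, hdp, h], hSadd p q s h'⟩
  exact qmb_noZeroDivisors qh dp hdp _ hQMB T hTirr hTtrans hTtot hTadd
    (fun p q h => Or.inl h)
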